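/- arXiv:1612.04890 — 6 statements merged into one kernel-verified Lean document; each statement's English description precedes it below -/
import Mathlib

section
/- For every i ∈ {1,…,k} and every index r with m_i ≤ r < m_{i+1}, one has w_r ≤ 2^{r−m_i} · w_{m_i}. -/
/-! Below the next element `m (i+1)` of `I`, every index `r > m i` lies outside `I`, so `w r` is
at most the sum of all earlier weights. As the weights before `m i` sum to at most `w (m i)`, each
such step at most doubles the partial sums, so `∑_{1 ≤ j < r} w j ≤ 2 ^ (r - m i) * w (m i)`. -/

open Finset

section Doubling

variable {w : ℕ → ℝ} {c a b : ℕ}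

theorem sum_Ico_le_two_pow_mul (hca : c ≤ a) (ha : ∑ j ∈ Ico c a, w j ≤ w a)
    (hstep : ∀ r, a < r → r < b → w r ≤ ∑ j ∈ Ico c r, w j) :
    ∀ r, a < r → r ≤ b → ∑ j ∈ Ico c r, w j ≤ 2 ^ (r - a) * w a := by
  intro r har
  induction r, har using Nat.le_induction with
  | base =>
    intro _
    rw [sum_Ico_succ_top hca, Nat.succ_sub (le_refl a), Nat.sub_self, pow_one]
    linarith
  | succ r har ih =>
    intro hrb
    have hsum := ih (by omega)
    rw [sum_Ico_succ_top (by omega), Nat.sub_add_comm (by omega), pow_succ]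
    linarith [hstep r (by omega) (by omega)]

theorem le_two_pow_mul_of_le_sum_Ico (hca : c ≤ a) (ha : ∑ j ∈ Ico c a, w j ≤ w a)
    (hstep : ∀ r, a < r → r < b → w r ≤ ∑ j ∈ Ico c r, w j) :
    ∀ r, a ≤ r → r < b → w r ≤ 2 ^ (r - a) * w a := by
  intro r har hrb
  rcases har.eq_or_lt with rfl | har
  · simp
  · exact (hstep r har hrb).trans (sum_Ico_le_two_pow_mul hca ha hstep r har hrb.le)

end Doubling

theorem StrictMonoOn.not_lt_of_lt_apply_succ {β : Type*} [Preorder β] {f : ℕ → β}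
    {s : Set ℕ} (hf : StrictMonoOn f s) {i j : ℕ} (hi : i ∈ s) (hi' : i + 1 ∈ s) (hj : j ∈ s)
    (hij : f i < f j) : ¬ f j < f (i + 1) := by
  have := (hf.lt_iff_lt hi hj).mp hij
  rw [hf.lt_iff_lt hj hi']
  omega

theorem Finset.Icc_one_sub_one (x : ℕ) : Icc 1 (x - 1) = Ico 1 x := by
  ext j
  simp only [mem_Icc, mem_Ico]
  omega

theorem stmt_0_general (n k : ℕ) (w : ℕ → ℝ)
    (m : ℕ → ℕ)
    (hI : ∀ x, ((1 ≤ x ∧ x ≤ n - 1) ∧ ∑ i ∈ Finset.Icc 1 (x - 1), w i < w x) ↔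
      ∃ i, 1 ≤ i ∧ i ≤ k ∧ m i = x)
    (hsm : StrictMonoOn m (Set.Icc 1 (k + 1)))
    (hmk : m (k + 1) = n) :
    ∀ i, 1 ≤ i → i ≤ k → ∀ r, m i ≤ r → r < m (i + 1) →
      w r ≤ 2 ^ (r - m i) * w (m i) := by
  simp only [Finset.Icc_one_sub_one] at hI
  intro i hi1 hik
  have hi : i ∈ Set.Icc 1 (k + 1) := ⟨hi1, by omega⟩
  have hi' : i + 1 ∈ Set.Icc 1 (k + 1) := ⟨by omega, by omega⟩
  obtain ⟨⟨hmi1, -⟩, hmi⟩ := (hI (m i)).mpr ⟨i, hi1, hik, rfl⟩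
  have hnext : m (i + 1) ≤ n :=
    hmk ▸ hsm.monotoneOn hi' ⟨by omega, le_rfl⟩ (by omega)
  refine le_two_pow_mul_of_le_sum_Ico hmi1 hmi.le fun r hr hr' ↦ ?_
  by_contra! hwr
  obtain ⟨j, hj1, hjk, rfl⟩ := (hI r).mp ⟨⟨by omega, by omega⟩, hwr⟩
  exact hsm.not_lt_of_lt_apply_succ hi hi' ⟨hj1, by omega⟩ hr hr'

/-- Context: `n ≥ 2`, positive nondecreasing weights `w 1 ≤ ⋯ ≤ w (n-1)`,
the index set `I = {m ∈ {1,…,n−1} : ∑_{i=1}^{m−1} w i < w m}` is enumerated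
as `m 1 < m 2 < ⋯ < m k`, and `m (k+1) = n`.
Statement: for every `i ∈ {1,…,k}` and every `r` with `m i ≤ r < m (i+1)`,
`w r ≤ 2 ^ (r − m i) * w (m i)`. -/
theorem stmt_0 (n k : ℕ) (hn : 2 ≤ n) (w : ℕ → ℝ)
    (hpos : ∀ i, 1 ≤ i → i ≤ n - 1 → 0 < w i)
    (hmono : ∀ i j, 1 ≤ i → i ≤ j → j ≤ n - 1 → w i ≤ w j)
    (m : ℕ → ℕ)
    (hI : ∀ x, ((1 ≤ x ∧ x ≤ n - 1) ∧ ∑ i ∈ Finset.Icc 1 (x - 1), w i < w x) ↔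
      ∃ i, 1 ≤ i ∧ i ≤ k ∧ m i = x)
    (hsm : StrictMonoOn m (Set.Icc 1 (k + 1)))
    (hmk : m (k + 1) = n) :
    ∀ i, 1 ≤ i → i ≤ k → ∀ r, m i ≤ r → r < m (i + 1) →
      w r ≤ 2 ^ (r - m i) * w (m i) :=
  stmt_0_general n k w m hI hsm hmk
end

section
/- For every i ∈ {1,…,k}, the partial sum s_i = Σ_{j=1}^{m_{i+1}−1} w_j satisfies s_i < 2^{m_{i+1}−m_i} · w_{m_i}. -/
/-- Context: `n ≥ 2`, positive nondecreasing weights `w 1 ≤ ⋯ ≤ w (n-1)`,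
the index set `I = {m ∈ {1,…,n−1} : ∑_{i=1}^{m−1} w i < w m}` is enumerated
as `m 1 < m 2 < ⋯ < m k`, and `m (k+1) = n`.
Statement: for every `i ∈ {1,…,k}`, the partial sum
`s i = ∑_{j=1}^{m (i+1) − 1} w j` satisfies `s i < 2 ^ (m (i+1) − m i) * w (m i)`. -/
theorem stmt_1 (n k : ℕ) (hn : 2 ≤ n) (w : ℕ → ℝ)
    (hpos : ∀ i, 1 ≤ i → i ≤ n - 1 → 0 < w i)
    (hmono : ∀ i j, 1 ≤ i → i ≤ j → j ≤ n - 1 → w i ≤ w j)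
    (m : ℕ → ℕ)
    (hI : ∀ x, ((1 ≤ x ∧ x ≤ n - 1) ∧ ∑ i ∈ Finset.Icc 1 (x - 1), w i < w x) ↔
      ∃ i, 1 ≤ i ∧ i ≤ k ∧ m i = x)
    (hsm : StrictMonoOn m (Set.Icc 1 (k + 1)))
    (hmk : m (k + 1) = n) :
    ∀ i, 1 ≤ i → i ≤ k →
      ∑ j ∈ Finset.Icc 1 (m (i + 1) - 1), w j < 2 ^ (m (i + 1) - m i) * w (m i) := by
  intro i hi1 hik
  have hmem_i : i ∈ Set.Icc 1 (k+1) := Set.mem_Icc.mpr ⟨hi1, by omega⟩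
  have hmem_i1 : (i+1) ∈ Set.Icc 1 (k+1) := Set.mem_Icc.mpr ⟨by omega, by omega⟩
  have hlt : m i < m (i+1) := hsm hmem_i hmem_i1 (by omega)
  have hmi_I : (1 ≤ m i ∧ m i ≤ n - 1) ∧
      ∑ j ∈ Finset.Icc 1 (m i - 1), w j < w (m i) :=
    (hI (m i)).2 ⟨i, hi1, hik, rfl⟩
  have hle_n : m (i+1) ≤ n := by
    rcases eq_or_lt_of_le (show i + 1 ≤ k + 1 by omega) with h | h
    · rw [h, hmk]
    · have := hsm hmem_i1 (Set.mem_Icc.mpr ⟨by omega, le_refl _⟩) h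
      omega
  have hnotI : ∀ x, m i < x → x < m (i+1) → w x ≤ ∑ j ∈ Finset.Icc 1 (x-1), w j := by
    intro x hx1 hx2
    by_contra h
    push_neg at h
    obtain ⟨j, hj1, hjk, hjx⟩ := (hI x).1 ⟨⟨by omega, by omega⟩, h⟩
    rcases le_or_gt j i with hji | hji
    · have : m j ≤ m i := hsm.monotoneOn (Set.mem_Icc.mpr ⟨hj1, by omega⟩) hmem_i hji
      omega
    · have : m (i+1) ≤ m j := hsm.monotoneOn hmem_i1 (Set.mem_Icc.mpr ⟨hj1, by omega⟩) hji
      omega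
  have hsum : ∀ x, 1 ≤ x →
      ∑ j ∈ Finset.Icc 1 x, w j = ∑ j ∈ Finset.Icc 1 (x-1), w j + w x := by
    intro x hx
    conv_lhs => rw [show x = (x-1)+1 by omega]
    rw [Finset.sum_Icc_succ_top (by omega), show x-1+1 = x by omega]
  have key : ∀ x, m i ≤ x → x ≤ m (i+1) - 1 →
      ∑ j ∈ Finset.Icc 1 x, w j < 2 ^ (x - m i + 1) * w (m i) := by
    intro x hx
    induction x, hx using Nat.le_induction with
    | base =>
      intro _
      rw [hsum (m i) hmi_I.1.1, show m i - m i + 1 = 1 by omega, pow_one]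
      linarith [hmi_I.2]
    | succ x hx ih =>
      intro hx2
      have ih' := ih (by omega)
      have hw : w (x+1) ≤ ∑ j ∈ Finset.Icc 1 x, w j := by
        have := hnotI (x+1) (by omega) (by omega)
        simpa using this
      rw [hsum (x+1) (by omega), show x+1-1 = x by omega,
        show x+1 - m i + 1 = (x - m i + 1) + 1 by omega, pow_succ]
      nlinarith [ih', hw]
  have := key (m (i+1) - 1) (by omega) le_rfl
  rwa [show m (i+1) - 1 - m i + 1 = m (i+1) - m i by omega] at this
end

section
/- For every i ∈ {1,…,k}, every ε > 0, and every natural number j, if (1+ε)^j · w_{m_i} < Σ_{j'=1}^{m_{i+1}−1} w_{j'}, then j < (m_{i+1} − m_i) · (ln 2 / ln(1+ε)). Consequently, the (w_{m_i}, s_i, 1+ε)-jump, where s_i = Σ_{j'=1}^{m_{i+1}−1} w_{j'}, has at most (m_{i+1} − m_i) · (ln 2 / ln(1+ε)) + 2 elements. -/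
/-!
Between two consecutive elements `m i < m (i+1)` of `I` no index belongs to `I`, so each weight
`w x` with `m i < x < m (i+1)` is at most the sum of the weights before it: every such step at
most doubles the partial sum. Since `m i ∈ I`, the partial sum up to `m i` is already below
`2 w (m i)`, hence `s_i < 2^(m (i+1) - m i) w (m i)`. Comparing with `(1+ε)^j w (m i) < s_i` and
taking logarithms gives `j < c := (m (i+1) - m i) log 2 / log (1+ε)`, so the jump consists of at
most `⌈c⌉` of the points `(1+ε)^j w (m i)` together with its endpoint `s_i`.
-/

/-- The `(α, β, τ)`-jump: the set `{α, τα, τ²α, …, τ^k α, β}` where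
`τ^k α < β ≤ τ^{k+1} α`, i.e. all powers `τ^j α` that are `< β`, together with `β`. -/
def jump (α β τ : ℝ) : Set ℝ :=
  {x | ∃ j : ℕ, x = τ ^ j * α ∧ τ ^ j * α < β} ∪ {β}

open Finset

theorem StrictMonoOn.not_lt_between_succ {α : Type*} [LinearOrder α] {m : ℕ → α} {s : Set ℕ}
    (hm : StrictMonoOn m s) {i i' : ℕ} (hi : i ∈ s) (hi' : i' ∈ s) (hsucc : i + 1 ∈ s)
    (hlt : m i < m i') : ¬ m i' < m (i + 1) := by
  rw [hm.lt_iff_lt hi hi'] at hlt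
  rw [hm.lt_iff_lt hi' hsucc]
  omega

theorem sum_Icc_lt_two_pow_mul {w : ℕ → ℝ} {a c : ℕ} (hac : a ≤ c)
    (hlead : ∑ i ∈ Icc 1 (a - 1), w i < w a)
    (hdom : ∀ x, a < x → x ≤ c → w x ≤ ∑ i ∈ Icc 1 (x - 1), w i) :
    ∑ i ∈ Icc 1 c, w i < 2 ^ (c + 1 - a) * w a := by
  obtain ⟨d, rfl⟩ := Nat.exists_eq_add_of_le hac
  rw [show a + d + 1 - a = d + 1 by omega]
  clear hac
  induction d with
  | zero =>
    rcases a with _ | a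
    · simpa using hlead
    · rw [Nat.add_sub_cancel] at hlead
      rw [Nat.add_zero, sum_Icc_succ_top (by omega), zero_add, pow_one]
      linarith
  | succ d ih =>
    have hsum := ih (fun x hax hxc => hdom x hax (by omega))
    have hnext := hdom (a + d + 1) (by omega) le_rfl
    rw [Nat.add_sub_cancel] at hnext
    rw [← Nat.add_assoc, sum_Icc_succ_top (by omega), pow_succ]
    linarith

theorem Real.natCast_lt_mul_log_div_log_of_pow_lt {τ : ℝ} (hτ : 1 < τ) {j d : ℕ}
    (h : τ ^ j < 2 ^ d) : (j : ℝ) < d * (Real.log 2 / Real.log τ) := by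
  have hlog := Real.log_lt_log (by positivity) h
  rw [Real.log_pow, Real.log_pow] at hlog
  rw [← mul_div_assoc, lt_div_iff₀ (Real.log_pos hτ)]
  exact hlog

theorem jump_subset_image_range_union {α β τ c : ℝ} (h : ∀ j : ℕ, τ ^ j * α < β → (j : ℝ) < c) :
    jump α β τ ⊆ (fun j : ℕ => τ ^ j * α) '' ↑(range ⌈c⌉₊) ∪ {β} := by
  rintro x (⟨j, rfl, hj⟩ | hx)
  · refine Or.inl ⟨j, ?_, rfl⟩
    simpa using Nat.lt_ceil.mpr (h j hj)
  · exact Or.inr hx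

theorem jump_finite_and_ncard_le {α β τ c : ℝ} (hc : 0 ≤ c)
    (h : ∀ j : ℕ, τ ^ j * α < β → (j : ℝ) < c) :
    (jump α β τ).Finite ∧ ((jump α β τ).ncard : ℝ) ≤ c + 2 := by
  set N := ⌈c⌉₊
  have hsub := jump_subset_image_range_union h
  have hfin : ((fun j : ℕ => τ ^ j * α) '' ↑(range N) ∪ {β}).Finite :=
    ((range N).finite_toSet.image _).union (Set.finite_singleton β)
  have hcard : (jump α β τ).ncard ≤ N + 1 :=
    calc (jump α β τ).ncard
        ≤ ((fun j : ℕ => τ ^ j * α) '' ↑(range N) ∪ {β}).ncard := Set.ncard_le_ncard hsub hfin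
      _ ≤ ((fun j : ℕ => τ ^ j * α) '' ↑(range N)).ncard + ({β} : Set ℝ).ncard :=
          Set.ncard_union_le _ _
      _ ≤ (↑(range N) : Set ℕ).ncard + 1 := by
          rw [Set.ncard_singleton]
          exact Nat.add_le_add_right (Set.ncard_image_le (range N).finite_toSet) 1
      _ = N + 1 := by rw [Set.ncard_coe_finset, card_range]
  refine ⟨hfin.subset hsub, ?_⟩
  have hN : (N : ℝ) < c + 1 := Nat.ceil_lt_add_one hc
  have hcard' : ((jump α β τ).ncard : ℝ) ≤ N + 1 := by exact_mod_cast hcard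
  linarith

theorem stmt_2_general (n k : ℕ) (w : ℕ → ℝ)
    (hpos : ∀ i, 1 ≤ i → i ≤ n - 1 → 0 < w i)
    (m : ℕ → ℕ)
    (hI : ∀ x, ((1 ≤ x ∧ x ≤ n - 1) ∧ ∑ i ∈ Finset.Icc 1 (x - 1), w i < w x) ↔
      ∃ i, 1 ≤ i ∧ i ≤ k ∧ m i = x)
    (hsm : StrictMonoOn m (Set.Icc 1 (k + 1)))
    (hmk : m (k + 1) = n) :
    ∀ i, 1 ≤ i → i ≤ k → ∀ ε : ℝ, 0 < ε →
      (∀ j : ℕ, (1 + ε) ^ j * w (m i) < ∑ j' ∈ Finset.Icc 1 (m (i + 1) - 1), w j' →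
        (j : ℝ) < ((m (i + 1) : ℝ) - (m i : ℝ)) * (Real.log 2 / Real.log (1 + ε))) ∧
      (jump (w (m i)) (∑ j' ∈ Finset.Icc 1 (m (i + 1) - 1), w j') (1 + ε)).Finite ∧
      ((jump (w (m i)) (∑ j' ∈ Finset.Icc 1 (m (i + 1) - 1), w j') (1 + ε)).ncard : ℝ) ≤
        ((m (i + 1) : ℝ) - (m i : ℝ)) * (Real.log 2 / Real.log (1 + ε)) + 2 := by
  intro i hi hik ε hε
  have hi_mem : i ∈ Set.Icc 1 (k + 1) := ⟨hi, by omega⟩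
  have hsucc_mem : i + 1 ∈ Set.Icc 1 (k + 1) := ⟨by omega, by omega⟩
  have hgap : m i < m (i + 1) := hsm hi_mem hsucc_mem (by omega)
  have hlast : m (i + 1) ≤ n := hmk ▸ hsm.monotoneOn hsucc_mem ⟨by omega, le_rfl⟩ (by omega)
  obtain ⟨⟨hmi, hmin⟩, hlead⟩ := (hI (m i)).mpr ⟨i, hi, hik, rfl⟩
  have hdom : ∀ x, m i < x → x ≤ m (i + 1) - 1 → w x ≤ ∑ j ∈ Icc 1 (x - 1), w j := by
    intro x hx hxb
    by_contra! hxI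
    obtain ⟨i', hi', hi'k, rfl⟩ := (hI x).mp ⟨⟨by omega, by omega⟩, hxI⟩
    exact hsm.not_lt_between_succ hi_mem ⟨hi', by omega⟩ hsucc_mem hx (by omega)
  have hsum := sum_Icc_lt_two_pow_mul (by omega) hlead hdom
  rw [show m (i + 1) - 1 + 1 - m i = m (i + 1) - m i by omega] at hsum
  have hbound : ∀ j : ℕ, (1 + ε) ^ j * w (m i) < ∑ j' ∈ Icc 1 (m (i + 1) - 1), w j' →
      (j : ℝ) < ((m (i + 1) : ℝ) - (m i : ℝ)) * (Real.log 2 / Real.log (1 + ε)) := by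
    intro j hj
    rw [← Nat.cast_sub hgap.le]
    exact Real.natCast_lt_mul_log_div_log_of_pow_lt (by linarith)
      (lt_of_mul_lt_mul_right (hj.trans hsum) (hpos _ hmi hmin).le)
  have hc : 0 ≤ ((m (i + 1) : ℝ) - (m i : ℝ)) * (Real.log 2 / Real.log (1 + ε)) := by
    have : (m i : ℝ) ≤ m (i + 1) := by exact_mod_cast hgap.le
    have := Real.log_pos (show (1 : ℝ) < 1 + ε by linarith)
    have := Real.log_pos (show (1 : ℝ) < 2 by norm_num)
    positivity
  exact ⟨hbound, jump_finite_and_ncard_le hc hbound⟩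

/-- Context: `n ≥ 2`, positive nondecreasing weights `w 1 ≤ ⋯ ≤ w (n-1)`,
the index set `I = {m ∈ {1,…,n−1} : ∑_{i=1}^{m−1} w i < w m}` is enumerated
as `m 1 < m 2 < ⋯ < m k`, and `m (k+1) = n`.
Statement: for every `i ∈ {1,…,k}`, every `ε > 0` and every `j : ℕ`, if
`(1+ε)^j * w (m i) < ∑_{j'=1}^{m (i+1) − 1} w j'` then
`j < (m (i+1) − m i) * (ln 2 / ln (1+ε))`; consequently the
`(w (m i), s i, 1+ε)`-jump, where `s i = ∑_{j'=1}^{m (i+1) − 1} w j'`, is finite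
and has at most `(m (i+1) − m i) * (ln 2 / ln (1+ε)) + 2` elements. -/
theorem stmt_2 (n k : ℕ) (hn : 2 ≤ n) (w : ℕ → ℝ)
    (hpos : ∀ i, 1 ≤ i → i ≤ n - 1 → 0 < w i)
    (hmono : ∀ i j, 1 ≤ i → i ≤ j → j ≤ n - 1 → w i ≤ w j)
    (m : ℕ → ℕ)
    (hI : ∀ x, ((1 ≤ x ∧ x ≤ n - 1) ∧ ∑ i ∈ Finset.Icc 1 (x - 1), w i < w x) ↔
      ∃ i, 1 ≤ i ∧ i ≤ k ∧ m i = x)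
    (hsm : StrictMonoOn m (Set.Icc 1 (k + 1)))
    (hmk : m (k + 1) = n) :
    ∀ i, 1 ≤ i → i ≤ k → ∀ ε : ℝ, 0 < ε →
      (∀ j : ℕ, (1 + ε) ^ j * w (m i) < ∑ j' ∈ Finset.Icc 1 (m (i + 1) - 1), w j' →
        (j : ℝ) < ((m (i + 1) : ℝ) - (m i : ℝ)) * (Real.log 2 / Real.log (1 + ε))) ∧
      (jump (w (m i)) (∑ j' ∈ Finset.Icc 1 (m (i + 1) - 1), w j') (1 + ε)).Finite ∧
      ((jump (w (m i)) (∑ j' ∈ Finset.Icc 1 (m (i + 1) - 1), w j') (1 + ε)).ncard : ℝ) ≤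
        ((m (i + 1) : ℝ) - (m i : ℝ)) * (Real.log 2 / Real.log (1 + ε)) + 2 :=
  stmt_2_general n k w hpos m hI hsm hmk
end

section
/- Let T be a minimum spanning tree of S, and let w_1 ≤ w_2 ≤ ⋯ ≤ w_{n−1} be its edge weights sorted in nondecreasing order. Define the index set I = {m ∈ {1,…,n−1} : Σ_{i=1}^{m−1} w_i < w_m}, let m_1 < m_2 < ⋯ < m_k be the elements of I, and set m_{k+1} = n. Then for every r ∈ {1,…,k−1} and every pair x, y ∈ S, the distance d(x,y) does not lie strictly between Σ_{j=1}^{m_{r+1}−1} w_j and w_{m_{r+1}}; that is, either d(x,y) ≤ Σ_{j=1}^{m_{r+1}−1} w_j or d(x,y) ≥ w_{m_{r+1}}. -/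
/-- The length of an edge of the complete graph on a finite point set `S` in a
metric space: the distance between its two endpoints. -/
noncomputable def edgeLen {X : Type*} [MetricSpace X] (S : Finset X) : Sym2 ↥S → ℝ :=
  Sym2.lift ⟨fun a b => dist (a : X) (b : X), fun a b => dist_comm (a : X) (b : X)⟩

/-- The total weight of a graph `T` on a finite point set `S` in a metric space:
the sum of the distances between the endpoints of its edges. -/
noncomputable def graphWeight {X : Type*} [MetricSpace X] (S : Finset X)
    (T : SimpleGraph ↥S) : ℝ :=
  ∑ᶠ e ∈ T.edgeSet, edgeLen S e

/-!
Let `p` be the path from `x` to `y` in the minimum spanning tree and `M = m (r + 1)`.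
If every edge of `p` is one of `e 1, …, e (M - 1)`, the triangle inequality along `p` gives
`d(x, y) ≤ w 1 + ⋯ + w (M - 1)`. Otherwise `p` contains some `e i` with `i ≥ M`; exchanging
`e i` for the edge `xy` yields another spanning tree, so minimality gives
`w M ≤ w i ≤ d(x, y)` (the cycle property of minimum spanning trees).
-/

lemma List.sum_map_le_sum_comp_of_forall_mem {α ι M : Type*} [AddCommMonoid M] [PartialOrder M]
    [IsOrderedAddMonoid M] [DecidableEq α] {l : List α} (hl : l.Nodup) {f : α → M} {g : ι → α}
    {A : Finset ι} (hA : ∀ a ∈ l, ∃ i ∈ A, g i = a) (hf : ∀ i ∈ A, 0 ≤ f (g i)) :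
    (l.map f).sum ≤ ∑ i ∈ A, f (g i) := by
  have hsub : l.toFinset ⊆ A.image g := fun a ha => by
    simpa using hA a (List.mem_toFinset.mp ha)
  have himage : ∀ a ∈ A.image g, 0 ≤ f a := by
    simpa using hf
  calc (l.map f).sum = ∑ a ∈ l.toFinset, f a := (List.sum_toFinset f hl).symm
    _ ≤ ∑ a ∈ A.image g, f a := Finset.sum_le_sum_of_subset_of_nonneg hsub fun a ha _ => himage a ha
    _ ≤ ∑ i ∈ A, f (g i) := Finset.sum_image_le_of_nonneg himage

namespace SimpleGraph

variable {V : Type*} {T : SimpleGraph V}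

lemma Walk.IsPath.ne_of_mem_edges {x y : V} {p : T.Walk x y} (hp : p.IsPath) {s : Sym2 V}
    (hs : s ∈ p.edges) : x ≠ y := by
  rintro rfl
  simp [edges_eq_nil.mpr (isPath_iff_nil.mp hp)] at hs

lemma IsTree.not_reachable_deleteEdges_of_mem_edges (hT : T.IsTree) {x y : V} {p : T.Walk x y}
    (hp : p.IsPath) {s : Sym2 V} (hs : s ∈ p.edges) : ¬(T.deleteEdges {s}).Reachable x y := by
  classical
  obtain ⟨a, b⟩ := s
  intro hr
  obtain ⟨q, hq⟩ := reachable_deleteEdges_iff_exists_walk.mp hr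
  have : q.toPath = ⟨p, hp⟩ := (hT.isAcyclic.subsingleton_path x y).elim _ _
  exact hq (q.edges_toPath_subset_edges (by rw [this]; exact hs))

lemma IsTree.isTree_sup_edge_deleteEdges (hT : T.IsTree) {x y : V} (hxy : ¬T.Adj x y)
    {p : T.Walk x y} (hp : p.IsPath) {s : Sym2 V} (hs : s ∈ p.edges) :
    ((T ⊔ edge x y).deleteEdges {s}).IsTree := by
  have hne : x ≠ y := hp.ne_of_mem_edges hs
  refine ⟨?_, ?_⟩
  · obtain ⟨a, b⟩ := s
    refine (hT.connected.mono le_sup_left).connected_delete_edge_of_not_isBridge ?_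
    let p' : (T ⊔ edge x y).Walk x y := p.mapLe le_sup_left
    have hyx : (T ⊔ edge x y).Adj y x := Or.inr (by simp [edge_adj, hne.symm])
    have hcycle : (Walk.cons hyx p').IsCycle := by
      refine (Walk.cons_isCycle_iff _ _).mpr ⟨hp.mapLe _, ?_⟩
      simpa [p', Walk.edges_map, Sym2.eq_swap] using fun h => hxy (p.adj_of_mem_edges h)
    exact fun hb => hb.notMem_edges_of_isCycle hcycle (by simp [p', Walk.edges_map, hs])
  · have hedge : (edge x y).deleteEdges {s} = edge x y := by
      have hsxy : s ≠ s(x, y) := by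
        rintro rfl
        exact hxy (p.adj_of_mem_edges hs)
      simp [hsxy]
    rw [deleteEdges_sup, hedge]
    exact (hT.isAcyclic.anti (deleteEdges_le _)).sup_edge_of_not_reachable
      (hT.not_reachable_deleteEdges_of_mem_edges hp hs)

end SimpleGraph

open SimpleGraph

section
variable {X : Type*} [MetricSpace X] {S : Finset X}

@[simp]
lemma edgeLen_mk (a b : S) : edgeLen S s(a, b) = dist (a : X) b := rfl

lemma edgeLen_nonneg (s : Sym2 S) : 0 ≤ edgeLen S s := by
  induction s using Sym2.ind with
  | _ a b => exact dist_nonneg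

lemma dist_le_sum_edgeLen {G : SimpleGraph S} {u v : S} (p : G.Walk u v) :
    dist (u : X) v ≤ (p.edges.map (edgeLen S)).sum := by
  induction p with
  | nil => simp
  | @cons u a v _ q ih =>
    calc dist (u : X) v ≤ dist (u : X) a + dist (a : X) v := dist_triangle _ _ _
      _ ≤ _ := by simpa using ih

lemma graphWeight_sup_edge_deleteEdges_add {T : SimpleGraph S} {x y : S} (hxy : x ≠ y)
    (hnadj : ¬T.Adj x y) {s : Sym2 S} (hs : s ∈ T.edgeSet) :
    graphWeight S ((T ⊔ edge x y).deleteEdges {s}) + edgeLen S s =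
      graphWeight S T + dist (x : X) y := by
  have hsxy : s ≠ s(x, y) := by
    rintro rfl
    exact hnadj hs
  have hedges : ((T ⊔ edge x y).deleteEdges {s}).edgeSet = insert s(x, y) (T.edgeSet \ {s}) := by
    ext t
    simp only [edgeSet_deleteEdges, edgeSet_sup, edgeSet_edge_of_ne hxy]
    grind
  have hxy_notMem : s(x, y) ∉ T.edgeSet \ {s} := fun h => hnadj h.1
  have hT_weight : graphWeight S T = edgeLen S s + ∑ᶠ t ∈ T.edgeSet \ {s}, edgeLen S t := by
    rw [graphWeight, ← finsum_mem_insert _ (by simp) (Set.toFinite _),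
      Set.insert_sdiff_self_of_mem hs]
  rw [hT_weight, graphWeight, hedges, finsum_mem_insert _ hxy_notMem (Set.toFinite _), edgeLen_mk]
  ring

theorem edgeLen_le_dist_of_mem_edges {T : SimpleGraph S} (hT : T.IsTree)
    (hmin : ∀ T' : SimpleGraph S, T'.IsTree → graphWeight S T ≤ graphWeight S T')
    {x y : S} {p : T.Walk x y} (hp : p.IsPath) {s : Sym2 S} (hs : s ∈ p.edges) :
    edgeLen S s ≤ dist (x : X) y := by
  by_cases hadj : T.Adj x y
  · have hp_eq : (⟨p, hp⟩ : T.Path x y) = Path.singleton hadj :=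
      (hT.isAcyclic.subsingleton_path x y).elim _ _
    obtain rfl : s = s(x, y) := by
      simpa [show p = Walk.cons hadj Walk.nil from congrArg Subtype.val hp_eq] using hs
    rfl
  · have := hmin _ (hT.isTree_sup_edge_deleteEdges hadj hp hs)
    have := graphWeight_sup_edge_deleteEdges_add (X := X) (hp.ne_of_mem_edges hs) hadj
      (p.edges_subset_edgeSet hs)
    linarith

end

theorem stmt_4_general {X : Type*} [MetricSpace X] (S : Finset X) (n : ℕ)
    (T : SimpleGraph ↥S) (hT : T.IsTree)
    (hmin : ∀ T' : SimpleGraph ↥S, T'.IsTree → graphWeight S T ≤ graphWeight S T')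
    (w : ℕ → ℝ) (e : ℕ → Sym2 ↥S)
    (hrange : ∀ s, s ∈ T.edgeSet ↔ ∃ i, 1 ≤ i ∧ i ≤ n - 1 ∧ e i = s)
    (hw : ∀ i, 1 ≤ i → i ≤ n - 1 → w i = edgeLen S (e i))
    (hmono : ∀ i j, 1 ≤ i → i ≤ j → j ≤ n - 1 → w i ≤ w j)
    (k : ℕ) (m : ℕ → ℕ)
    (hI : ∀ x, ((1 ≤ x ∧ x ≤ n - 1) ∧ ∑ i ∈ Finset.Icc 1 (x - 1), w i < w x) ↔
      ∃ i, 1 ≤ i ∧ i ≤ k ∧ m i = x) :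
    ∀ r, 1 ≤ r → r ≤ k - 1 → ∀ x y : ↥S,
      dist (x : X) (y : X) ≤ ∑ j ∈ Finset.Icc 1 (m (r + 1) - 1), w j ∨
        w (m (r + 1)) ≤ dist (x : X) (y : X) := by
  classical
  intro r hr1 hr2 x y
  set M := m (r + 1)
  obtain ⟨⟨hM1, hMn⟩, -⟩ := (hI M).mpr ⟨r + 1, by omega, by omega, rfl⟩
  obtain ⟨p, hp, -⟩ := hT.existsUnique_path x y
  by_cases hsmall : ∀ s ∈ p.edges, ∃ i ∈ Finset.Icc 1 (M - 1), e i = s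
  · left
    have hwA : ∀ i ∈ Finset.Icc 1 (M - 1), w i = edgeLen S (e i) := fun i hi => by
      rw [Finset.mem_Icc] at hi
      exact hw i hi.1 (by omega)
    calc dist (x : X) y ≤ (p.edges.map (edgeLen S)).sum := dist_le_sum_edgeLen p
      _ ≤ ∑ i ∈ Finset.Icc 1 (M - 1), edgeLen S (e i) :=
        List.sum_map_le_sum_comp_of_forall_mem hp.edges_nodup hsmall
          fun _ _ => edgeLen_nonneg _
      _ = ∑ i ∈ Finset.Icc 1 (M - 1), w i := (Finset.sum_congr rfl hwA).symm
  · right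
    push Not at hsmall
    obtain ⟨s, hs, hlarge⟩ := hsmall
    obtain ⟨i, hi1, hin, rfl⟩ := (hrange s).mp (p.edges_subset_edgeSet hs)
    have hMi : M ≤ i := by
      by_contra! h
      exact hlarge i (Finset.mem_Icc.mpr ⟨hi1, by omega⟩) rfl
    calc w M ≤ w i := hmono M i hM1 hMi hin
      _ = edgeLen S (e i) := hw i hi1 hin
      _ ≤ dist (x : X) y := edgeLen_le_dist_of_mem_edges hT hmin hp hs

/-- Let `S` be a finite set of `n ≥ 2` points in a metric space, `T` a minimum
spanning tree of `S`, and `w 1 ≤ ⋯ ≤ w (n-1)` its edge weights sorted in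
nondecreasing order (enumerated by an injection `e` from `{1,…,n−1}` onto the
edge set of `T`). With `I = {m ∈ {1,…,n−1} : ∑_{i=1}^{m−1} w i < w m}`
enumerated as `m 1 < ⋯ < m k` and `m (k+1) = n`: for every `r ∈ {1,…,k−1}`
and all `x, y ∈ S`, either `d(x,y) ≤ ∑_{j=1}^{m (r+1) − 1} w j` or
`d(x,y) ≥ w (m (r+1))`. -/
theorem stmt_4 {X : Type*} [MetricSpace X] (S : Finset X) (n : ℕ)
    (hn : n = S.card) (hn2 : 2 ≤ n)
    (T : SimpleGraph ↥S) (hT : T.IsTree)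
    (hmin : ∀ T' : SimpleGraph ↥S, T'.IsTree → graphWeight S T ≤ graphWeight S T')
    (w : ℕ → ℝ) (e : ℕ → Sym2 ↥S)
    (hinj : ∀ i, 1 ≤ i → i ≤ n - 1 → ∀ j, 1 ≤ j → j ≤ n - 1 → e i = e j → i = j)
    (hrange : ∀ s, s ∈ T.edgeSet ↔ ∃ i, 1 ≤ i ∧ i ≤ n - 1 ∧ e i = s)
    (hw : ∀ i, 1 ≤ i → i ≤ n - 1 → w i = edgeLen S (e i))
    (hmono : ∀ i j, 1 ≤ i → i ≤ j → j ≤ n - 1 → w i ≤ w j)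
    (k : ℕ) (m : ℕ → ℕ)
    (hI : ∀ x, ((1 ≤ x ∧ x ≤ n - 1) ∧ ∑ i ∈ Finset.Icc 1 (x - 1), w i < w x) ↔
      ∃ i, 1 ≤ i ∧ i ≤ k ∧ m i = x)
    (hsm : StrictMonoOn m (Set.Icc 1 (k + 1)))
    (hmk : m (k + 1) = n) :
    ∀ r, 1 ≤ r → r ≤ k - 1 → ∀ x y : ↥S,
      dist (x : X) (y : X) ≤ ∑ j ∈ Finset.Icc 1 (m (r + 1) - 1), w j ∨
        w (m (r + 1)) ≤ dist (x : X) (y : X) :=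
  stmt_4_general S n T hT hmin w e hrange hw hmono k m hI
end

section
/- Let ε ∈ (0,1), let d ≥ 1 be an integer, and let π_1, …, π_{d+1} be reals with ε ≤ π_j ≤ 1 for all j. If for some index i with 1 ≤ i ≤ d one has π_i · ∏_{j=1}^{i−1} (1−π_j) < π_{d+1} · ∏_{j=1}^{d} (1−π_j), then d − i + 1 < ln(ε) / ln(1−ε). -/
/-!
Split `∏_{j=1}^{d} (1 - p j)` at `i`. The tail `∏_{j=i}^{d} (1 - p j)` has `d - i + 1` factors
in `[0, 1 - ε]`, so with `A = ∏_{j<i} (1 - p j) ≥ 0` the hypothesis gives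
`ε A ≤ p i A < (1 - ε)^(d-i+1) A`. Hence `ε < (1 - ε)^(d-i+1)`, and taking logarithms
(dividing by `log (1 - ε) < 0`) gives the bound.
-/

open Finset

theorem Finset.prod_Icc_eq_prod_Ico_mul_prod_Icc {M : Type*} [CommMonoid M] (f : ℕ → M)
    {a i d : ℕ} (hai : a ≤ i) (hid : i ≤ d + 1) :
    ∏ j ∈ Icc a d, f j = (∏ j ∈ Ico a i, f j) * ∏ j ∈ Icc i d, f j := by
  rw [← Ico_add_one_right_eq_Icc, ← Ico_add_one_right_eq_Icc]
  exact (prod_Ico_consecutive f hai hid).symm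

section OneSub

variable {ι : Type*} {s : Finset ι} {p : ι → ℝ} {ε : ℝ}

theorem prod_one_sub_nonneg (hp : ∀ j ∈ s, p j ≤ 1) : 0 ≤ ∏ j ∈ s, (1 - p j) :=
  prod_nonneg fun j hj => sub_nonneg.mpr (hp j hj)

theorem prod_one_sub_le_pow_card (hp : ∀ j ∈ s, ε ≤ p j ∧ p j ≤ 1) :
    ∏ j ∈ s, (1 - p j) ≤ (1 - ε) ^ s.card := by
  rw [← prod_const]
  exact prod_le_prod (fun j hj => sub_nonneg.mpr (hp j hj).2) fun j hj => by linarith [hp j hj]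

end OneSub

theorem Real.lt_log_div_log_one_sub_of_lt_pow {ε : ℝ} (hε0 : 0 < ε) (hε1 : ε < 1) {n : ℕ}
    (h : ε < (1 - ε) ^ n) : (n : ℝ) < Real.log ε / Real.log (1 - ε) := by
  have hlog : Real.log ε < n * Real.log (1 - ε) := by
    simpa only [Real.log_pow] using Real.log_lt_log hε0 h
  exact (lt_div_iff_of_neg (Real.log_neg (by linarith) (by linarith))).mpr hlog

theorem stmt_9_general (ε : ℝ) (hε0 : 0 < ε) (hε1 : ε < 1) (d : ℕ)
    (p : ℕ → ℝ) (hp : ∀ j, 1 ≤ j → j ≤ d + 1 → ε ≤ p j ∧ p j ≤ 1)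
    (i : ℕ) (hi1 : 1 ≤ i) (hid : i ≤ d)
    (h : p i * ∏ j ∈ Finset.Icc 1 (i - 1), (1 - p j) <
      p (d + 1) * ∏ j ∈ Finset.Icc 1 d, (1 - p j)) :
    (d : ℝ) - (i : ℝ) + 1 < Real.log ε / Real.log (1 - ε) := by
  have hpIcc : ∀ {a b}, 1 ≤ a → b ≤ d + 1 → ∀ j ∈ Icc a b, ε ≤ p j ∧ p j ≤ 1 := fun ha hb j hj =>
    hp j (ha.trans (mem_Icc.mp hj).1) ((mem_Icc.mp hj).2.trans hb)
  have hsplit : ∏ j ∈ Icc 1 d, (1 - p j) =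
      (∏ j ∈ Icc 1 (i - 1), (1 - p j)) * ∏ j ∈ Icc i d, (1 - p j) := by
    rw [prod_Icc_eq_prod_Ico_mul_prod_Icc _ hi1 (by omega),
      Icc_sub_one_right_eq_Ico_of_not_isMin (show ¬IsMin i from not_isMin_iff_bot_lt.mpr hi1)]
  set A := ∏ j ∈ Icc 1 (i - 1), (1 - p j)
  set C := ∏ j ∈ Icc i d, (1 - p j)
  have hA : 0 ≤ A := prod_one_sub_nonneg fun j hj => (hpIcc le_rfl (by omega) j hj).2
  have hC0 : 0 ≤ C := prod_one_sub_nonneg fun j hj => (hpIcc hi1 (by omega) j hj).2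
  have hC : C ≤ (1 - ε) ^ (d + 1 - i) := by
    simpa only [Nat.card_Icc] using prod_one_sub_le_pow_card (hpIcc hi1 (Nat.le_succ d))
  have key : ε * A < (1 - ε) ^ (d + 1 - i) * A := calc
    ε * A ≤ p i * A := mul_le_mul_of_nonneg_right (hp i hi1 (by omega)).1 hA
    _ < p (d + 1) * (A * C) := hsplit ▸ h
    _ ≤ 1 * (A * (1 - ε) ^ (d + 1 - i)) := by
      gcongr
      exact (hp (d + 1) (by omega) le_rfl).2
    _ = (1 - ε) ^ (d + 1 - i) * A := by ring
  have hn := Real.lt_log_div_log_one_sub_of_lt_pow hε0 hε1 (lt_of_mul_lt_mul_right key hA)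
  rwa [Nat.cast_sub (by omega), Nat.cast_add_one, add_sub_right_comm] at hn

/-- Let `ε ∈ (0,1)`, `d ≥ 1`, and `p 1, …, p (d+1)` reals with
`ε ≤ p j ≤ 1` for all `j`. If for some `i` with `1 ≤ i ≤ d` one has
`p i * ∏_{j=1}^{i−1} (1 − p j) < p (d+1) * ∏_{j=1}^{d} (1 − p j)`,
then `d − i + 1 < ln ε / ln (1−ε)`. -/
theorem stmt_9 (ε : ℝ) (hε0 : 0 < ε) (hε1 : ε < 1) (d : ℕ) (hd : 1 ≤ d)
    (p : ℕ → ℝ) (hp : ∀ j, 1 ≤ j → j ≤ d + 1 → ε ≤ p j ∧ p j ≤ 1)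
    (i : ℕ) (hi1 : 1 ≤ i) (hid : i ≤ d)
    (h : p i * ∏ j ∈ Finset.Icc 1 (i - 1), (1 - p j) <
      p (d + 1) * ∏ j ∈ Finset.Icc 1 d, (1 - p j)) :
    (d : ℝ) - (i : ℝ) + 1 < Real.log ε / Real.log (1 - ε) :=
  stmt_9_general ε hε0 hε1 d p hp i hi1 hid h
end

section
/- Let G be a finite tree (a connected acyclic simple graph) on a vertex set V with |V| ≥ 2, and let M ⊆ V be a set of vertices such that every vertex of G of degree at most 2 belongs to M. Then |V| ≤ 2|M| − 2. -/
/-- Let `G` be a finite tree on a vertex set `V` with `|V| ≥ 2`, and let `M ⊆ V`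
contain every vertex of `G` of degree at most `2`. Then `|V| ≤ 2|M| − 2`. -/
theorem stmt_14 {V : Type*} [Fintype V] [DecidableEq V] (G : SimpleGraph V)
    [DecidableRel G.Adj] (hG : G.IsTree) (hV : 2 ≤ Fintype.card V)
    (M : Finset V) (hM : ∀ v : V, G.degree v ≤ 2 → v ∈ M) :
    (Fintype.card V : ℤ) ≤ 2 * (M.card : ℤ) - 2 := by
  have hdeg1 : ∀ v : V, 1 ≤ G.degree v := by
    intro v
    have : 0 < G.degree v := by
      rw [G.degree_pos_iff_exists_adj]
      obtain ⟨w, hw⟩ := Fintype.exists_ne_of_one_lt_card (by omega) v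
      obtain ⟨p⟩ := hG.isConnected.preconnected v w
      have hnil : ¬ p.Nil := fun h => hw.symm (by
        have := SimpleGraph.Walk.Nil.eq h; exact this)
      exact ⟨p.getVert 1, p.adj_snd hnil⟩
    omega
  have he : G.edgeFinset.card + 1 = Fintype.card V := hG.card_edgeFinset
  have hsum : ∑ v, G.degree v = 2 * G.edgeFinset.card :=
    SimpleGraph.sum_degrees_eq_twice_card_edges G
  have hsplit : ∑ v, G.degree v =
      ∑ v ∈ M, G.degree v + ∑ v ∈ Mᶜ, G.degree v := by
    rw [Finset.sum_add_sum_compl]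
  have h1 : M.card ≤ ∑ v ∈ M, G.degree v := by
    calc M.card = ∑ _v ∈ M, 1 := by simp
    _ ≤ _ := Finset.sum_le_sum fun v _ => hdeg1 v
  have h3 : 3 * Mᶜ.card ≤ ∑ v ∈ Mᶜ, G.degree v := by
    calc 3 * Mᶜ.card = ∑ _v ∈ Mᶜ, 3 := by rw [Finset.sum_const]; ring
    _ ≤ _ := Finset.sum_le_sum fun v hv => by
        by_contra h
        exact (Finset.mem_compl.mp hv) (hM v (by omega))
  have hcc : Mᶜ.card = Fintype.card V - M.card := by
    rw [Finset.card_compl]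
  have hMle : M.card ≤ Fintype.card V := M.card_le_univ
  omega
end
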